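/- Let n ≥ 2 and k ≥ 3 with k odd. The sequence f(K₁) consisting of k letters following the pattern OUO…O (alternating starting with O, of odd length k), followed by 4n letters UOUO…UO (alternating starting with U), followed by k letters OUO…O, satisfies |Φ(f(K₁))| = 2n; and the sequence f(K₂) consisting of 2n letters OU…OU, then k letters UOU…U (alternating starting with U, of odd length k), then 2n letters OU…OU, then k letters UOU…U, satisfies |Φ(f(K₂))| = 0. -/
import Mathlib


/-- The two-letter alphabet {O, U}. -/
inductive OULetter : Type
  | O : OULetter
  | U : OULetter
deriving DecidableEq

open OULetter

/-- The sign `ε` of the letter `X` at the (1-indexed) position `i`: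
`+1` if (`X = O` and `i` is even) or (`X = U` and `i` is odd), and `-1` otherwise. -/
def eps (X : OULetter) (i : ℕ) : ℤ :=
  match X with
  | O => if i % 2 = 0 then 1 else -1
  | U => if i % 2 = 1 then 1 else -1

/-- The sign sum `Σ_{i=1}^m ε(X_i)` of a sequence `S = X₁X₂…X_m`. -/
def signSum (S : List OULetter) : ℤ :=
  ∑ j : Fin S.length, eps (S.get j) (j.1 + 1)

/-- The OU number `Φ(S) = (1/2)·Σ_{i=1}^m ε(X_i)` of a sequence `S`. -/
def Phi (S : List OULetter) : ℚ := (signSum S : ℚ) / 2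


/-- The letter different from the given one. -/
def otherLetter : OULetter → OULetter
  | O => U
  | U => O

/-- The alternating sequence of length n starting with the letter X. -/
def alt (X : OULetter) : ℕ → List OULetter
  | 0 => []
  | n + 1 => X :: alt (otherLetter X) n

def aux : List OULetter → ℕ → ℤ
  | [], _ => 0
  | x :: xs, off => eps x (off + 1) + aux xs (off + 1)

lemma other_other (X : OULetter) : otherLetter (otherLetter X) = X := by
  cases X <;> rfl

lemma alt_length (X : OULetter) (m : ℕ) : (alt X m).length = m := by
  induction m generalizing X with
  | zero => rfl
  | succ m ih => simp [alt, ih]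

lemma eps_add_two (X : OULetter) (i : ℕ) : eps X (i + 2) = eps X i := by
  cases X <;> simp [eps, Nat.add_mod]

lemma aux_append (A B : List OULetter) (off : ℕ) :
    aux (A ++ B) off = aux A off + aux B (off + A.length) := by
  induction A generalizing off with
  | nil => simp [aux]
  | cons x xs ih =>
    show eps x (off + 1) + aux (xs ++ B) (off + 1) =
      eps x (off + 1) + aux xs (off + 1) + aux B (off + (x :: xs).length)
    rw [ih (off + 1), List.length_cons,
      show off + 1 + xs.length = off + (xs.length + 1) from by omega, add_assoc]

lemma aux_eq (S : List OULetter) (off : ℕ) :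
    (∑ j : Fin S.length, eps (S.get j) (off + j.1 + 1)) = aux S off := by
  induction S generalizing off with
  | nil => simp [aux]
  | cons x xs ih =>
    show (∑ j : Fin (xs.length + 1), eps ((x :: xs).get j) (off + j.1 + 1)) = aux (x :: xs) off
    rw [Fin.sum_univ_succ]
    show eps x (off + 0 + 1) + (∑ j : Fin xs.length, eps (xs.get j) (off + (j.1 + 1) + 1)) =
      eps x (off + 1) + aux xs (off + 1)
    rw [← ih (off + 1)]
    congr 1
    apply Finset.sum_congr rfl
    intro j _
    congr 1
    omega

lemma signSum_eq_aux (S : List OULetter) : signSum S = aux S 0 := by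
  rw [signSum, ← aux_eq S 0]
  apply Finset.sum_congr rfl
  intro j _
  congr 1
  omega

lemma aux_alt : ∀ (m : ℕ) (X : OULetter) (off : ℕ),
    aux (alt X m) off =
      (((m + 1) / 2 : ℕ) : ℤ) * eps X (off + 1) +
        ((m / 2 : ℕ) : ℤ) * eps (otherLetter X) (off + 2)
  | 0, X, off => by simp [alt, aux]
  | 1, X, off => by simp [alt, aux]
  | (m + 2), X, off => by
    have h := aux_alt m X (off + 2)
    have halt : alt X (m + 2) = X :: otherLetter X :: alt X m := by
      simp [alt, other_other]
    rw [halt]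
    simp only [aux]
    rw [h]
    have e1 : eps X (off + 2 + 1) = eps X (off + 1) := by
      rw [show off + 2 + 1 = (off + 1) + 2 from rfl, eps_add_two]
    have e2 : eps (otherLetter X) (off + 2 + 2) = eps (otherLetter X) (off + 2) := by
      rw [eps_add_two]
    rw [e1, e2]
    have d1 : ((m + 2 + 1) / 2 : ℕ) = (m + 1) / 2 + 1 := by omega
    have d2 : ((m + 2) / 2 : ℕ) = m / 2 + 1 := by omega
    rw [d1, d2]
    push_cast
    ring

/-- For Jablonowski's diagram D_{n,k} (n ≥ 2, k ≥ 3 odd): the non-self OU sequence of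
the first component has cyclic OU number 2n and that of the second component has
cyclic OU number 0. -/
theorem phi_jablonowski (n k : ℕ) (hn : 2 ≤ n) (hk : 3 ≤ k) (hodd : Odd k) :
    |Phi (alt O k ++ alt U (4 * n) ++ alt O k)| = (2 * n : ℚ) ∧
      |Phi (alt O (2 * n) ++ alt U k ++ alt O (2 * n) ++ alt U k)| = 0 := by
  have hk2 : k % 2 = 1 := Nat.odd_iff.mp hodd
  have eO1 : eps O 1 = -1 := by simp [eps]
  have eU2 : eps U 2 = -1 := by simp [eps]
  -- eps values at odd/even positions
  have eOe : ∀ i, i % 2 = 0 → eps O i = 1 := fun i h => by simp [eps, h]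
  have eOo : ∀ i, i % 2 = 1 → eps O i = -1 := fun i h => by simp [eps, h]
  have eUe : ∀ i, i % 2 = 0 → eps U i = -1 := fun i h => by simp [eps, h]
  have eUo : ∀ i, i % 2 = 1 → eps U i = 1 := fun i h => by simp [eps, h]
  constructor
  · have hs : signSum (alt O k ++ alt U (4 * n) ++ alt O k) = -(4 * n) := by
      rw [signSum_eq_aux, aux_append, aux_append]
      simp only [List.length_append, alt_length, Nat.zero_add]
      rw [aux_alt, aux_alt, aux_alt]
      simp only [otherLetter]
      rw [eOo 1 (by omega), eUe 2 (by omega),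
          eUe (k + 1) (by omega), eOo (k + 2) (by omega),
          eOe (k + 4 * n + 1) (by omega), eUo (k + 4 * n + 2) (by omega)]
      have h1 : ((4 * n + 1) / 2 : ℕ) = 2 * n := by omega
      have h2 : ((4 * n) / 2 : ℕ) = 2 * n := by omega
      rw [h1, h2]
      push_cast
      ring
    have : Phi (alt O k ++ alt U (4 * n) ++ alt O k) = -(2 * n) := by
      rw [Phi, hs]; push_cast; ring
    rw [this, abs_neg, abs_of_nonneg (by positivity)]
  · have hs : signSum (alt O (2 * n) ++ alt U k ++ alt O (2 * n) ++ alt U k) = 0 := by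
      rw [signSum_eq_aux, aux_append, aux_append, aux_append]
      simp only [List.length_append, alt_length, Nat.zero_add]
      rw [aux_alt, aux_alt, aux_alt, aux_alt]
      simp only [otherLetter]
      rw [eOo 1 (by omega), eUe 2 (by omega),
          eUo (2 * n + 1) (by omega), eOe (2 * n + 2) (by omega),
          eOe (2 * n + k + 1) (by omega), eUo (2 * n + k + 2) (by omega),
          eUe (2 * n + k + 2 * n + 1) (by omega), eOo (2 * n + k + 2 * n + 2) (by omega)]
      push_cast
      ring
    rw [Phi, hs]
    simp
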